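/- arXiv:1712.07836 — 5 statements merged into one kernel-verified Lean document; each statement's English description precedes it below -/
import Mathlib

section
/- Let A be a commutative ring and φ: A → A a ring endomorphism. The map sending a·Θ^e (a ∈ A, e ∈ ℕ) to the additive endomorphism x ↦ a·φ^e(x) of A defines an isomorphism of ℕ-graded rings between the left skew polynomial ring A[Θ;φ] and the ring ℱ^{A,φ} = ⊕_{e≥0} ℱ^{A,φ}_e of φ-linear operators on A, where ℱ^{A,φ}_e is the set of φ^e-semilinear endomorphisms of A (additive maps ψ: A → A with ψ(a·x) = φ^e(a)·ψ(x) for all a, x ∈ A) and the multiplication on ℱ^{A,φ} is composition of maps. -/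
/-- The left skew polynomial ring `A[Θ;φ]`. -/
structure LeftSkewPolynomialRing (A : Type*) [CommRing A] (φ : A →+* A)
    (B : Type*) [Ring B] where
  ι : A →+* B
  θ : B
  theta_mul : ∀ a : A, θ * ι a = ι (φ a) * θ
  basis : Function.Bijective fun f : ℕ →₀ A => f.sum fun i a => ι a * θ ^ i

/-- The additive subgroup of `AddMonoid.End A` consisting of the `φ^e`-semilinear
(additive) endomorphisms of `A`, i.e. those `ψ` with `ψ (a * x) = φ^e a * ψ x`.
This is the degree-`e` piece `ℱ^{A,φ}_e` of the ring of `φ`-linear operators on `A`. -/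
def semilinearEnd (A : Type*) [CommRing A] (φ : A →+* A) (e : ℕ) :
    AddSubgroup (AddMonoid.End A) where
  carrier := {ψ | ∀ a x : A, ψ (a * x) = (φ ^ e) a * ψ x}
  add_mem' := by
    intro f g hf hg a x
    show f (a * x) + g (a * x) = (φ ^ e) a * (f x + g x)
    rw [hf a x, hg a x, mul_add]
  zero_mem' := by intro a x; simp
  neg_mem' := by
    intro f hf a x
    show -f (a * x) = (φ ^ e) a * -f x
    rw [hf a x, mul_neg]

/-- The pieces `ℱ^{A,φ}_e` form a graded monoid inside `AddMonoid.End A` (whose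
multiplication is composition of maps); hence `⨁ e, ℱ^{A,φ}_e` is an `ℕ`-graded ring,
the ring of `φ`-linear operators on `A`. -/
instance semilinearEnd.gradedMonoid (A : Type*) [CommRing A] (φ : A →+* A) :
    SetLike.GradedMonoid (semilinearEnd A φ) where
  one_mem := by intro a x; simp
  mul_mem := by
    intro i j f g hf hg a x
    have h1 : (φ ^ (i + j)) a = (φ ^ i) ((φ ^ j) a) := by
      simp [RingHom.coe_pow, Function.iterate_add_apply]
    show f (g (a * x)) = (φ ^ (i + j)) a * f (g x)
    rw [hg a x, hf ((φ ^ j) a) (g x), h1]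

/-- The `φ^e`-semilinear endomorphism `x ↦ a * φ^e x` of `A`, as an element of the
degree-`e` piece of the ring of `φ`-linear operators. -/
def mulSemilinear {A : Type*} [CommRing A] (φ : A →+* A) (a : A) (e : ℕ) :
    semilinearEnd A φ e :=
  ⟨((AddMonoidHom.mulLeft a).comp (φ ^ e).toAddMonoidHom : AddMonoid.End A),
    fun b x => show a * (φ ^ e) (b * x) = (φ ^ e) b * (a * (φ ^ e) x) by
      rw [map_mul, mul_left_comm]⟩

/-- aux -/
def pieceEquiv {A : Type*} [CommRing A] (φ : A →+* A) (e : ℕ) : A ≃+ semilinearEnd A φ e where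
  toFun a := mulSemilinear φ a e
  invFun ψ := ψ.1 1
  left_inv a := by
    show a * (φ ^ e) 1 = a
    simp
  right_inv ψ := by
    refine Subtype.ext (AddMonoidHom.ext fun x => ?_)
    show ψ.1 1 * (φ ^ e) x = ψ.1 x
    have := ψ.2 x 1
    rw [mul_one] at this
    rw [this, mul_comm]
  map_add' a b := by
    refine Subtype.ext (AddMonoidHom.ext fun x => ?_)
    show (a + b) * (φ ^ e) x = a * (φ ^ e) x + b * (φ ^ e) x
    ring


/-- `A[Θ;φ]` is isomorphic, as an `ℕ`-graded ring, to the ring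
`ℱ^{A,φ} = ⨁ e, ℱ^{A,φ}_e` of `φ`-linear operators on `A` (with multiplication given by
composition of maps), via `a·Θ^e ↦ (x ↦ a·φ^e x)`. -/
theorem leftSkewPolynomialRing_equiv_semilinearOperators
    {A : Type*} [CommRing A] (φ : A →+* A) {B : Type*} [Ring B]
    (sk : LeftSkewPolynomialRing A φ B) :
    ∃ b : B ≃+* (DirectSum ℕ fun e => ↥(semilinearEnd A φ e)),
      ∀ (a : A) (e : ℕ),
        b (sk.ι a * sk.θ ^ e) =
          DirectSum.of (fun e => ↥(semilinearEnd A φ e)) e (mulSemilinear φ a e) := by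
  classical
  -- the basis map as an AddMonoidHom
  set F : (ℕ →₀ A) →+ B :=
    Finsupp.liftAddHom (fun i => (AddMonoidHom.mulRight (sk.θ ^ i)).comp sk.ι.toAddMonoidHom)
    with hF
  have hFapp : ∀ f : ℕ →₀ A, F f = f.sum fun i a => sk.ι a * sk.θ ^ i := fun f => rfl
  have hbij : Function.Bijective F := sk.basis
  let e₁ : B ≃+ (ℕ →₀ A) := (AddEquiv.ofBijective F hbij).symm
  let e₂ : (ℕ →₀ A) ≃+ DirectSum ℕ fun e => ↥(semilinearEnd A φ e) :=
    finsuppAddEquivDFinsupp.trans (DFinsupp.mapRange.addEquiv fun e => pieceEquiv φ e)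
  let b₀ : B ≃+ DirectSum ℕ fun e => ↥(semilinearEnd A φ e) := e₁.trans e₂
  have hmono : ∀ (a : A) (e : ℕ), e₁ (sk.ι a * sk.θ ^ e) = Finsupp.single e a := by
    intro a e
    rw [AddEquiv.symm_apply_eq]
    have : (AddEquiv.ofBijective F hbij) (Finsupp.single e a) = sk.ι a * sk.θ ^ e := by
      show F (Finsupp.single e a) = _
      rw [hFapp, Finsupp.sum_single_index (by simp)]
    exact this.symm
  have he₂ : ∀ (a : A) (e : ℕ),
      e₂ (Finsupp.single e a) =
        DirectSum.of (fun e => ↥(semilinearEnd A φ e)) e (mulSemilinear φ a e) := by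
    intro a e
    show DFinsupp.mapRange.addEquiv _ (finsuppAddEquivDFinsupp (Finsupp.single e a)) = _
    rw [show (finsuppAddEquivDFinsupp (Finsupp.single e a) : Π₀ _ : ℕ, A)
        = DFinsupp.single e a from Finsupp.toDFinsupp_single e a]
    simp only [DirectSum.of, DFinsupp.singleAddHom_apply]
    rw [show (DFinsupp.mapRange.addEquiv fun e => pieceEquiv φ e) (DFinsupp.single e a)
        = DFinsupp.mapRange (fun i x => pieceEquiv φ i x) (fun i => (pieceEquiv φ i).map_zero)
            (DFinsupp.single e a) from rfl,
      DFinsupp.mapRange_single]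
    rfl
  have hb₀ : ∀ (a : A) (e : ℕ),
      b₀ (sk.ι a * sk.θ ^ e) =
        DirectSum.of (fun e => ↥(semilinearEnd A φ e)) e (mulSemilinear φ a e) := by
    intro a e
    show e₂ (e₁ _) = _
    rw [hmono, he₂]
  -- theta powers commute
  have hthpow : ∀ (e : ℕ) (c : A), sk.θ ^ e * sk.ι c = sk.ι ((φ ^ e) c) * sk.θ ^ e := by
    intro e c
    induction e with
    | zero => simp
    | succ n ih =>
      rw [pow_succ', mul_assoc, ih, ← mul_assoc, sk.theta_mul, mul_assoc, ← pow_succ']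
      congr 2
      simp [RingHom.coe_pow, Function.iterate_succ_apply']
  -- multiplicativity on monomials
  have hmul : ∀ (a c : A) (i j : ℕ),
      b₀ ((sk.ι a * sk.θ ^ i) * (sk.ι c * sk.θ ^ j)) =
        b₀ (sk.ι a * sk.θ ^ i) * b₀ (sk.ι c * sk.θ ^ j) := by
    intro a c i j
    have key : (sk.ι a * sk.θ ^ i) * (sk.ι c * sk.θ ^ j)
        = sk.ι (a * (φ ^ i) c) * sk.θ ^ (i + j) := by
      rw [mul_assoc, ← mul_assoc (sk.θ ^ i), hthpow, map_mul, mul_assoc, ← pow_add,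
        ← mul_assoc]
    rw [key, hb₀, hb₀, hb₀, DirectSum.of_mul_of]
    congr 1
    refine Subtype.ext (AddMonoidHom.ext fun x => ?_)
    show (a * (φ ^ i) c) * (φ ^ (i + j)) x = a * (φ ^ i) (c * (φ ^ j) x)
    rw [map_mul, ← mul_assoc]
    congr 1
    simp [RingHom.coe_pow, Function.iterate_add_apply]
  -- full multiplicativity
  have hmul' : ∀ x y : B, b₀ (x * y) = b₀ x * b₀ y := by
    intro x y
    obtain ⟨f, rfl⟩ := hbij.2 x
    obtain ⟨g, rfl⟩ := hbij.2 y
    have hb : ∀ z : B, b₀ z = b₀.toAddMonoidHom z := fun _ => rfl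
    simp only [hb]
    rw [hFapp, hFapp, Finsupp.sum, Finsupp.sum, Finset.sum_mul_sum, map_sum, map_sum, map_sum,
      Finset.sum_mul_sum]
    refine Finset.sum_congr rfl fun i _ => ?_
    rw [map_sum]
    refine Finset.sum_congr rfl fun j _ => ?_
    exact hmul (f i) (g j) i j
  exact ⟨{ b₀ with map_mul' := hmul' }, hb₀⟩
end

section
/- Let A be a commutative Noetherian local ring of prime characteristic p, let F: A → A be the Frobenius endomorphism (F(x) = x^p), and let a ∈ A. Let J(a) denote the left ideal of A[Θ;F] generated by the set {a^{p^e−1}·Θ^e − 1 : e ≥ 1}. Regard the localization A_a as a left A[Θ;F]-module via the Frobenius action Θ·y := y^p for y ∈ A_a. Then A_a is isomorphic, as a left A[Θ;F]-module, to A[Θ;F]/J(a). -/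
theorem IsLocalization.Away.algebraMap_pow_mul_invSelf_pow {R S : Type*} [CommRing R]
    [CommRing S] [Algebra R S] (a : R) [IsLocalization.Away a S] (m : ℕ) :
    algebraMap R S (a ^ m) * IsLocalization.Away.invSelf a ^ m = 1 := by
  rw [map_pow, ← mul_pow, IsLocalization.Away.mul_invSelf, one_pow]

namespace LeftSkewPolynomialRing

variable {A : Type*} [CommRing A] {B : Type*} [Ring B]

theorem theta_pow_mul {φ : A →+* A} (sk : LeftSkewPolynomialRing A φ B) (i : ℕ) (b : A) :
    sk.θ ^ i * sk.ι b = sk.ι (φ^[i] b) * sk.θ ^ i := by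
  induction i generalizing b with
  | zero => simp
  | succ i ih =>
    rw [pow_succ, mul_assoc, sk.theta_mul, ← mul_assoc, ih, mul_assoc, ← pow_succ,
      Function.iterate_succ_apply]

variable {p : ℕ} [ExpChar A p] (sk : LeftSkewPolynomialRing A (frobenius A p) B)

theorem theta_pow_mul_frobenius (i : ℕ) (b : A) :
    sk.θ ^ i * sk.ι b = sk.ι (b ^ p ^ i) * sk.θ ^ i := by
  rw [theta_pow_mul, iterate_frobenius]

/-- The left ideal `J(a)` of `A[Θ;F]`. -/
def awayIdeal (a : A) : Submodule B B :=
  Submodule.span B {z : B | ∃ e : ℕ, 1 ≤ e ∧ z = sk.ι (a ^ (p ^ e - 1)) * sk.θ ^ e - 1}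

theorem mkQ_monomial_eq_of_le (a c : A) {i n : ℕ} (hin : i ≤ n) :
    (sk.awayIdeal a).mkQ (sk.ι c * sk.θ ^ i) =
      (sk.awayIdeal a).mkQ (sk.ι (c * a ^ (p ^ n - p ^ i)) * sk.θ ^ n) := by
  obtain rfl | hlt := hin.eq_or_lt
  · simp
  obtain ⟨e, he, rfl⟩ : ∃ e, 1 ≤ e ∧ n = i + e := ⟨n - i, by omega, by omega⟩
  have hgen : sk.ι (a ^ (p ^ e - 1)) * sk.θ ^ e - 1 ∈ sk.awayIdeal a :=
    Submodule.subset_span ⟨e, he, rfl⟩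
  have hexp : (p ^ e - 1) * p ^ i = p ^ (i + e) - p ^ i := by
    rw [Nat.sub_mul, one_mul, ← pow_add, add_comm]
  have hmul : (sk.ι c * sk.θ ^ i) * (sk.ι (a ^ (p ^ e - 1)) * sk.θ ^ e - 1) =
      sk.ι (c * a ^ (p ^ (i + e) - p ^ i)) * sk.θ ^ (i + e) - sk.ι c * sk.θ ^ i := by
    rw [mul_sub, mul_one, mul_assoc (sk.ι c), ← mul_assoc (sk.θ ^ i), theta_pow_mul_frobenius,
      ← mul_assoc, ← mul_assoc, ← map_mul, mul_assoc, ← pow_add, ← pow_mul, hexp]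
  rw [Submodule.mkQ_apply, Submodule.mkQ_apply, eq_comm, Submodule.Quotient.eq, ← hmul]
  exact Submodule.smul_mem _ _ hgen

theorem exists_mkQ_eq_monomial (a : A) (x : B) :
    ∃ (d : A) (n : ℕ), (sk.awayIdeal a).mkQ x = (sk.awayIdeal a).mkQ (sk.ι d * sk.θ ^ n) := by
  obtain ⟨f, rfl⟩ := sk.basis.2 x
  refine ⟨∑ i ∈ f.support, f i * a ^ (p ^ f.support.sup id - p ^ i), f.support.sup id, ?_⟩
  dsimp only
  rw [Finsupp.sum, map_sum, map_sum, Finset.sum_mul, map_sum]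
  exact Finset.sum_congr rfl fun i hi =>
    sk.mkQ_monomial_eq_of_le a _ (Finset.le_sup (f := id) hi)

theorem mkQ_monomial_eq_zero (hp : 1 < p) {a d : A} {k : ℕ} (hd : a ^ k * d = 0) (n : ℕ) :
    (sk.awayIdeal a).mkQ (sk.ι d * sk.θ ^ n) = 0 := by
  have hk : k ≤ p ^ (n + k) - p ^ n := by
    have hkp : k ≤ p ^ k - 1 := by have := Nat.lt_pow_self (n := k) hp; omega
    rw [pow_add, ← Nat.mul_sub_one]
    exact hkp.trans (Nat.le_mul_of_pos_left _ (Nat.pow_pos (by omega)))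
  have hcoeff : d * a ^ (p ^ (n + k) - p ^ n) = 0 := by
    rw [← Nat.sub_add_cancel hk, pow_add]
    linear_combination a ^ (p ^ (n + k) - p ^ n - k) * hd
  rw [sk.mkQ_monomial_eq_of_le a d (Nat.le_add_right n k), hcoeff, map_zero, zero_mul, map_zero]

variable {S : Type*} [CommRing S] [Module B S]

theorem theta_pow_smul (hθ : ∀ y : S, sk.θ • y = y ^ p) (e : ℕ) (y : S) :
    sk.θ ^ e • y = y ^ p ^ e := by
  induction e generalizing y with
  | zero => simp
  | succ e ih => rw [pow_succ, mul_smul, hθ, ih, ← pow_mul, ← pow_succ']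

variable [Algebra A S]

theorem monomial_smul (hι : ∀ (r : A) (y : S), sk.ι r • y = algebraMap A S r * y)
    (hθ : ∀ y : S, sk.θ • y = y ^ p) (c : A) (i : ℕ) (y : S) :
    (sk.ι c * sk.θ ^ i) • y = algebraMap A S c * y ^ p ^ i := by
  rw [mul_smul, sk.theta_pow_smul hθ, hι]

variable (a : A) [IsLocalization.Away a S]

open IsLocalization.Away in
theorem surjective_toSpanSingleton_invSelf (hp : 1 < p)
    (hι : ∀ (r : A) (y : S), sk.ι r • y = algebraMap A S r * y)
    (hθ : ∀ y : S, sk.θ • y = y ^ p) :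
    Function.Surjective (LinearMap.toSpanSingleton B S (invSelf a)) := by
  intro z
  obtain ⟨n, r, hz⟩ := surj a z
  have hn : n ≤ p ^ n := (Nat.lt_pow_self hp).le
  refine ⟨sk.ι (r * a ^ (p ^ n - n)) * sk.θ ^ n, ?_⟩
  rw [LinearMap.toSpanSingleton_apply, sk.monomial_smul hι hθ]
  calc algebraMap A S (r * a ^ (p ^ n - n)) * invSelf a ^ p ^ n
      = z * (algebraMap A S (a ^ p ^ n) * invSelf a ^ p ^ n) := by
        rw [← pow_sub_mul_pow a hn]
        simp only [map_mul, map_pow]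
        rw [← hz]
        ring
    _ = z := by rw [algebraMap_pow_mul_invSelf_pow, mul_one]

open IsLocalization.Away in
theorem awayIdeal_le_ker (hι : ∀ (r : A) (y : S), sk.ι r • y = algebraMap A S r * y)
    (hθ : ∀ y : S, sk.θ • y = y ^ p) :
    sk.awayIdeal a ≤ LinearMap.ker (LinearMap.toSpanSingleton B S (invSelf a)) := by
  refine Submodule.span_le.2 ?_
  rintro _ ⟨e, he, rfl⟩
  have hpow : invSelf a ^ p ^ e = invSelf a ^ (p ^ e - 1) * (invSelf a : S) := by
    rw [← pow_succ, Nat.sub_add_cancel (expChar_pow_pos A p e)]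
  simp only [SetLike.mem_coe, LinearMap.mem_ker, LinearMap.toSpanSingleton_apply, sub_smul,
    one_smul, sk.monomial_smul hι hθ]
  rw [hpow, ← mul_assoc, algebraMap_pow_mul_invSelf_pow, one_mul, sub_self]

open IsLocalization.Away in
theorem ker_le_awayIdeal (hp : 1 < p)
    (hι : ∀ (r : A) (y : S), sk.ι r • y = algebraMap A S r * y)
    (hθ : ∀ y : S, sk.θ • y = y ^ p) :
    LinearMap.ker (LinearMap.toSpanSingleton B S (invSelf a)) ≤ sk.awayIdeal a := by
  intro x hx
  obtain ⟨d, n, hdn⟩ := sk.exists_mkQ_eq_monomial a x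
  have hmono : (sk.ι d * sk.θ ^ n) • invSelf a = (0 : S) := by
    have hsub := sk.awayIdeal_le_ker a hι hθ ((Submodule.Quotient.eq _).1 hdn)
    rwa [LinearMap.mem_ker, map_sub, LinearMap.mem_ker.1 hx, zero_sub, neg_eq_zero] at hsub
  have hd : algebraMap A S d = algebraMap A S 0 := by
    rw [sk.monomial_smul hι hθ] at hmono
    rw [map_zero, ← mul_one (algebraMap A S d),
      ← algebraMap_pow_mul_invSelf_pow (S := S) a (p ^ n), mul_left_comm, hmono, mul_zero]
  obtain ⟨k, hk⟩ := exists_of_eq a hd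
  rw [mul_zero] at hk
  rw [← Submodule.Quotient.mk_eq_zero, ← Submodule.mkQ_apply, hdn]
  exact sk.mkQ_monomial_eq_zero hp hk n

noncomputable def awayEquivQuotient (hp : 1 < p)
    (hι : ∀ (r : A) (y : S), sk.ι r • y = algebraMap A S r * y)
    (hθ : ∀ y : S, sk.θ • y = y ^ p) :
    S ≃ₗ[B] B ⧸ sk.awayIdeal a :=
  (LinearMap.quotKerEquivOfSurjective _
      (sk.surjective_toSpanSingleton_invSelf a hp hι hθ)).symm.trans
    (Submodule.quotEquivOfEq _ _
      ((sk.ker_le_awayIdeal a hp hι hθ).antisymm (sk.awayIdeal_le_ker a hι hθ)))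

end LeftSkewPolynomialRing

theorem localization_iso_skewPolynomialRing_quotient_general
    {A : Type*} [CommRing A]
    (p : ℕ) [Fact p.Prime] [CharP A p]
    {B : Type*} [Ring B] (sk : LeftSkewPolynomialRing A (frobenius A p) B)
    (a : A)
    (inst : Module B (Localization.Away a))
    (hι : ∀ (r : A) (y : Localization.Away a),
      (letI := inst; sk.ι r • y) = algebraMap A (Localization.Away a) r * y)
    (hθ : ∀ y : Localization.Away a, (letI := inst; sk.θ • y) = y ^ p) :
    letI := inst
    Nonempty ((Localization.Away a) ≃ₗ[B]
      B ⧸ Submodule.span B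
        {z : B | ∃ e : ℕ, 1 ≤ e ∧ z = sk.ι (a ^ (p ^ e - 1)) * sk.θ ^ e - 1}) :=
  letI := inst
  ⟨sk.awayEquivQuotient a (Fact.out : p.Prime).one_lt hι hθ⟩

/-- Let `A` be a commutative Noetherian local ring of prime characteristic `p`, with
Frobenius `F`, and let `a ∈ A`.  Let `J(a)` be the left ideal of `A[Θ;F]` generated by
`{a^{p^e-1}·Θ^e - 1 : e ≥ 1}`.  Regarding the localization `A_a` as a left
`A[Θ;F]`-module via the Frobenius action `Θ • y = y^p`, one has
`A_a ≅ A[Θ;F]/J(a)` as left `A[Θ;F]`-modules. -/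
theorem localization_iso_skewPolynomialRing_quotient
    {A : Type*} [CommRing A] [IsNoetherianRing A] [IsLocalRing A]
    (p : ℕ) [Fact p.Prime] [CharP A p]
    {B : Type*} [Ring B] (sk : LeftSkewPolynomialRing A (frobenius A p) B)
    (a : A)
    (inst : Module B (Localization.Away a))
    (hι : ∀ (r : A) (y : Localization.Away a),
      (letI := inst; sk.ι r • y) = algebraMap A (Localization.Away a) r * y)
    (hθ : ∀ y : Localization.Away a, (letI := inst; sk.θ • y) = y ^ p) :
    letI := inst
    Nonempty ((Localization.Away a) ≃ₗ[B]
      B ⧸ Submodule.span B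
        {z : B | ∃ e : ℕ, 1 ≤ e ∧ z = sk.ι (a ^ (p ^ e - 1)) * sk.θ ^ e - 1}) :=
  localization_iso_skewPolynomialRing_quotient_general p sk a inst hι hθ
end

section
/- Let K be a commutative ring, S = K[x_1,…,x_n], and φ: S → S a flat K-algebra homomorphism with φ(x_i) = s_i·x_i for elements s_i ∈ S. For every 0 ≤ l ≤ n, the composite ∂_l ∘ ∂_{l+1} of consecutive differentials of the φ-Koszul chain complex FK_•(x_1,…,x_n) is zero; hence FK_•(x_1,…,x_n) is a chain complex of left S[Θ;φ]-modules. -/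
noncomputable section

namespace PhiKoszul

variable {S : Type*} [CommRing S] {φ : S →+* S} {B : Type*} [Ring B] {n : ℕ}

/-- The left `B`-linear map `B → N` sending `b` to `b • v`. -/
def toSpan {N : Type*} [AddCommGroup N] [Module B N] (v : N) : B →ₗ[B] N where
  toFun b := b • v
  map_add' a b := add_smul a b v
  map_smul' a b := mul_smul a b v

/-- Extension of a family `s : Fin n → S` to `Fin (n+1)`, with value `1` at the last
index (which corresponds to the extra basis vector `u`). -/
def extOne (s : Fin n → S) (j : Fin (n + 1)) : S :=
  if h : (j : ℕ) < n then s ⟨j, h⟩ else 1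

/-- The degree-`l` term `FK_l` of the `φ`-Koszul complex: the free left
`S[Θ;φ]`-module on the `l`-element subsets of `{e_1, …, e_n, u}` (where `u`
corresponds to the last element of `Fin (n+1)`). -/
abbrev FK (B : Type*) [Ring B] (n l : ℕ) : Type _ :=
  {t : Finset (Fin (n + 1)) // t.card = l} →₀ B

/-- The coefficient with which the basis element `T \ {i}` occurs (up to sign) in the
image of the basis element `T` under the `φ`-Koszul differential: deleting `e_i` from a
wedge without `u` gives `x_i`; deleting `e_i` from a wedge with `u` gives `φ(x_i)`;
deleting `u` gives `Θ - s_{j_1}⋯s_{j_{l-1}}`. -/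
def coeff (sk : LeftSkewPolynomialRing S φ B) (x s : Fin n → S)
    (T : Finset (Fin (n + 1))) (i : Fin (n + 1)) : B :=
  if h : (i : ℕ) < n then
    (if Fin.last n ∈ T then sk.ι (φ (x ⟨i, h⟩)) else sk.ι (x ⟨i, h⟩))
  else sk.θ - sk.ι (∏ j ∈ T.erase (Fin.last n), extOne s j)

/-- The image of the basis element `T` under the `φ`-Koszul differential
`∂ : FK_{l+1} → FK_l`, namely `Σ_{i ∈ T} (-1)^{|{j ∈ T : j < i}|} coeff(T,i) • (T\{i})`. -/
def tgt (sk : LeftSkewPolynomialRing S φ B) (x s : Fin n → S) (l : ℕ)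
    (T : {t : Finset (Fin (n + 1)) // t.card = l + 1}) : FK B n l :=
  ∑ i ∈ T.1.attach,
    ((-1 : ℤ) ^ (T.1.filter fun j => j < i.1).card) •
      Finsupp.single
        ⟨T.1.erase i.1, by rw [Finset.card_erase_of_mem i.2, T.2]; rfl⟩
        (coeff sk x s T.1 i.1)

/-- The `φ`-Koszul differential `∂_{l+1} : FK_{l+1} → FK_l`, as a map of left
`S[Θ;φ]`-modules. -/
def FKd (sk : LeftSkewPolynomialRing S φ B) (x s : Fin n → S) (l : ℕ) :
    FK B n (l + 1) →ₗ[B] FK B n l :=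
  Finsupp.lsum ℕ fun T => toSpan (tgt sk x s l T)

end PhiKoszul

end

open PhiKoszul MvPolynomial

/-!
Extend the differential to the free module on all subsets of `{e_1, …, e_n, u}`, forgetting the
grading. Applying it twice to a wedge `T`, the term deleting `i` then `j` cancels the term
deleting `j` then `i`: the Koszul signs of the two orders differ by `-1`, and the products of
coefficients agree. For two `e`'s the coefficients lie in the commutative image of `S`; for `e_a`
and `u` the identity `φ(x_a) (Θ - ∏_{T∖{u,e_a}} s_j) = (Θ - ∏_{T∖{u}} s_j) x_a` follows from
`Θ x_a = φ(x_a) Θ` and `φ(x_a) = s_a x_a`.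
-/

theorem Finset.sum_sum_erase_eq_zero_of_antisymm {α M : Type*} [DecidableEq α]
    [AddCommGroup M] {T : Finset α} {f : α → α → M}
    (hf : ∀ i ∈ T, ∀ j ∈ T, i ≠ j → f i j + f j i = 0) :
    ∑ i ∈ T, ∑ j ∈ T.erase i, f i j = 0 := by
  rw [Finset.sum_sigma']
  refine Finset.sum_involution (fun p _ => ⟨p.2, p.1⟩) ?_ ?_ ?_ (fun _ _ => rfl)
  · rintro ⟨i, j⟩ hp
    simp only [Finset.mem_sigma, Finset.mem_erase] at hp
    exact hf i hp.1 j hp.2.2 (Ne.symm hp.2.1)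
  · rintro ⟨i, j⟩ hp _ h
    simp only [Finset.mem_sigma, Finset.mem_erase] at hp
    exact hp.2.1 (congrArg Sigma.fst h)
  · rintro ⟨i, j⟩ hp
    simp only [Finset.mem_sigma, Finset.mem_erase] at hp ⊢
    exact ⟨hp.2.2, Ne.symm hp.2.1, hp.1⟩

namespace PhiKoszul

section Sign

variable {α : Type*} [LinearOrder α] (T : Finset α) {i j : α}

/-- The paper's `(-1)^{r-1}` for deleting the `r`-th factor `i` of the wedge `T`. -/
def koszulSign (T : Finset α) (i : α) : ℤ :=
  (-1) ^ (T.filter fun k => k < i).card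

theorem koszulSign_erase_of_le (h : j ≤ i) : koszulSign (T.erase i) j = koszulSign T j := by
  rw [koszulSign, Finset.filter_erase, Finset.erase_eq_of_notMem (by simp [h]), koszulSign]

theorem koszulSign_erase_of_lt (hj : j ∈ T) (h : j < i) :
    koszulSign (T.erase j) i = -koszulSign T i := by
  have hmem : j ∈ T.filter fun k => k < i := Finset.mem_filter.mpr ⟨hj, h⟩
  rw [koszulSign, Finset.filter_erase, koszulSign,
    ← Finset.card_erase_add_one hmem, pow_succ, mul_neg_one, neg_neg]

theorem koszulSign_mul_koszulSign_erase_swap (hi : i ∈ T) (hj : j ∈ T) (hij : i ≠ j) :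
    koszulSign T i * koszulSign (T.erase i) j = -(koszulSign T j * koszulSign (T.erase j) i) := by
  rcases hij.lt_or_gt with h | h
  · rw [koszulSign_erase_of_lt T hi h, koszulSign_erase_of_le T h.le]
    ring
  · rw [koszulSign_erase_of_le T h.le, koszulSign_erase_of_lt T hj h]
    ring

end Sign

theorem toSpan_apply {B N : Type*} [Ring B] [AddCommGroup N] [Module B N] (v : N) (b : B) :
    toSpan v b = b • v :=
  rfl

variable {S : Type*} [CommRing S] {φ : S →+* S} {B : Type*} [Ring B] {n : ℕ}
  (sk : LeftSkewPolynomialRing S φ B) (x s : Fin n → S)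

section Coeff

variable (T : Finset (Fin (n + 1)))

theorem extOne_castSucc (k : Fin n) : extOne s k.castSucc = s k := by
  simp [extOne]

theorem coeff_castSucc (k : Fin n) :
    coeff sk x s T k.castSucc =
      if Fin.last n ∈ T then sk.ι (φ (x k)) else sk.ι (x k) := by
  simp [coeff]

theorem coeff_last :
    coeff sk x s T (Fin.last n) = sk.θ - sk.ι (∏ j ∈ T.erase (Fin.last n), extOne s j) := by
  simp [coeff]

theorem coeff_castSucc_mul_coeff_erase_comm (a b : Fin n) :
    coeff sk x s T a.castSucc * coeff sk x s (T.erase a.castSucc) b.castSucc =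
      coeff sk x s T b.castSucc * coeff sk x s (T.erase b.castSucc) a.castSucc := by
  simp only [coeff_castSucc, Finset.mem_erase, ne_eq, (Fin.castSucc_ne_last _).symm,
    not_false_eq_true, true_and]
  split_ifs <;> simp only [← map_mul, mul_comm]

theorem coeff_castSucc_mul_coeff_erase_last (hx : ∀ i, φ (x i) = s i * x i) {a : Fin n}
    (ha : a.castSucc ∈ T) (hu : Fin.last n ∈ T) :
    coeff sk x s T a.castSucc * coeff sk x s (T.erase a.castSucc) (Fin.last n) =
      coeff sk x s T (Fin.last n) * coeff sk x s (T.erase (Fin.last n)) a.castSucc := by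
  have hprod : ∏ j ∈ T.erase (Fin.last n), extOne s j =
      s a * ∏ j ∈ (T.erase a.castSucc).erase (Fin.last n), extOne s j := by
    rw [← extOne_castSucc s a, Finset.erase_right_comm,
      Finset.mul_prod_erase _ _ (Finset.mem_erase.mpr ⟨Fin.castSucc_ne_last a, ha⟩)]
  simp only [coeff_castSucc, coeff_last, Finset.mem_erase, ne_eq,
    not_true_eq_false, false_and, if_false, if_pos hu, hprod]
  rw [mul_sub, sub_mul, ← sk.theta_mul, ← map_mul, ← map_mul, hx]
  congr 2
  ring

theorem coeff_mul_coeff_erase_comm (hx : ∀ i, φ (x i) = s i * x i) {i j : Fin (n + 1)}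
    (hi : i ∈ T) (hj : j ∈ T) (hij : i ≠ j) :
    coeff sk x s T i * coeff sk x s (T.erase i) j =
      coeff sk x s T j * coeff sk x s (T.erase j) i := by
  induction i using Fin.lastCases with
  | last =>
    induction j using Fin.lastCases with
    | last => exact absurd rfl hij
    | cast b => exact (coeff_castSucc_mul_coeff_erase_last sk x s T hx hj hi).symm
  | cast a =>
    induction j using Fin.lastCases with
    | last => exact coeff_castSucc_mul_coeff_erase_last sk x s T hx hi hj
    | cast b => exact coeff_castSucc_mul_coeff_erase_comm sk x s T a b

end Coeff

/-- The image of the wedge `T` under the `φ`-Koszul differential, in the free module on all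
subsets of `{e_1, …, e_n, u}`. -/
noncomputable def boundary (T : Finset (Fin (n + 1))) : Finset (Fin (n + 1)) →₀ B :=
  ∑ i ∈ T, koszulSign T i • Finsupp.single (T.erase i) (coeff sk x s T i)

/-- The `φ`-Koszul differential on the direct sum of all the `FK_l`, forgetting the grading. -/
noncomputable def totalDiff : (Finset (Fin (n + 1)) →₀ B) →ₗ[B] (Finset (Fin (n + 1)) →₀ B) :=
  Finsupp.lsum ℕ fun T => toSpan (boundary sk x s T)

theorem totalDiff_single (T : Finset (Fin (n + 1))) (b : B) :
    totalDiff sk x s (Finsupp.single T b) = b • boundary sk x s T := by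
  rw [totalDiff, Finsupp.lsum_single, toSpan_apply]

theorem totalDiff_boundary (hx : ∀ i, φ (x i) = s i * x i) (T : Finset (Fin (n + 1))) :
    totalDiff sk x s (boundary sk x s T) = 0 := by
  have hterm : ∀ i ∈ T, totalDiff sk x s
      (koszulSign T i • Finsupp.single (T.erase i) (coeff sk x s T i)) =
      ∑ j ∈ T.erase i, Finsupp.single ((T.erase i).erase j)
        ((koszulSign T i * koszulSign (T.erase i) j) •
          (coeff sk x s T i * coeff sk x s (T.erase i) j)) := by
    intro i _
    rw [map_zsmul, totalDiff_single, boundary, Finset.smul_sum, Finset.smul_sum]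
    refine Finset.sum_congr rfl fun j _ => ?_
    rw [smul_comm (coeff sk x s T i), smul_smul, Finsupp.smul_single, smul_eq_mul,
      Finsupp.smul_single]
  rw [boundary, map_sum, Finset.sum_congr rfl hterm]
  refine Finset.sum_sum_erase_eq_zero_of_antisymm fun i hi j hj hij => ?_
  rw [Finset.erase_right_comm, ← Finsupp.single_add,
    koszulSign_mul_koszulSign_erase_swap T hi hj hij,
    coeff_mul_coeff_erase_comm sk x s T hx hi hj hij, neg_smul, neg_add_cancel,
    Finsupp.single_zero]

theorem totalDiff_comp_self (hx : ∀ i, φ (x i) = s i * x i) :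
    (totalDiff sk x s).comp (totalDiff sk x s) = 0 :=
  Finsupp.lhom_ext fun T b => by
    rw [LinearMap.comp_apply, totalDiff_single, map_smul, totalDiff_boundary sk x s hx,
      smul_zero, LinearMap.zero_apply]

noncomputable def inclusion (B : Type*) [Ring B] (n l : ℕ) :
    FK B n l →ₗ[B] (Finset (Fin (n + 1)) →₀ B) :=
  Finsupp.lmapDomain B B Subtype.val

theorem inclusion_injective (l : ℕ) : Function.Injective (inclusion B n l) :=
  Finsupp.mapDomain_injective Subtype.val_injective

theorem inclusion_single {l : ℕ} (t : {t : Finset (Fin (n + 1)) // t.card = l}) (b : B) :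
    inclusion B n l (Finsupp.single t b) = Finsupp.single t.1 b :=
  Finsupp.mapDomain_single

theorem inclusion_tgt (l : ℕ) (T : {t : Finset (Fin (n + 1)) // t.card = l + 1}) :
    inclusion B n l (tgt sk x s l T) = boundary sk x s T.1 := by
  rw [tgt, map_sum, boundary, ← Finset.sum_attach T.1]
  refine Finset.sum_congr rfl fun i _ => ?_
  rw [map_zsmul, inclusion_single]
  rfl

theorem inclusion_comp_FKd (l : ℕ) :
    (inclusion B n l).comp (FKd sk x s l) = (totalDiff sk x s).comp (inclusion B n (l + 1)) :=
  Finsupp.lhom_ext fun T b => by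
    rw [LinearMap.comp_apply, LinearMap.comp_apply, inclusion_single, totalDiff_single, FKd,
      Finsupp.lsum_single, toSpan_apply, map_smul, inclusion_tgt]

end PhiKoszul

theorem phiKoszul_comp_eq_zero_general
    {K : Type*} [CommRing K] {n : ℕ}
    (φ : MvPolynomial (Fin n) K →ₐ[K] MvPolynomial (Fin n) K)
    (s : Fin n → MvPolynomial (Fin n) K)
    (hs : ∀ i, φ (X i) = s i * X i)
    {B : Type*} [Ring B]
    (sk : LeftSkewPolynomialRing (MvPolynomial (Fin n) K)
      (φ : MvPolynomial (Fin n) K →+* MvPolynomial (Fin n) K) B) :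
    ∀ l : ℕ, (FKd sk X s l).comp (FKd sk X s (l + 1)) = 0 := by
  intro l
  rw [← LinearMap.cancel_left (inclusion_injective l), LinearMap.comp_zero,
    ← LinearMap.comp_assoc, inclusion_comp_FKd, LinearMap.comp_assoc, inclusion_comp_FKd,
    ← LinearMap.comp_assoc, totalDiff_comp_self sk X s hs, LinearMap.zero_comp]

/-- Let `K` be a commutative ring, `S = K[x_1,…,x_n]`, and `φ : S → S` a flat
`K`-algebra homomorphism with `φ(x_i) = s_i·x_i`.  Then consecutive differentials of the
`φ`-Koszul chain complex `FK_•(x_1,…,x_n)` compose to zero, i.e. `∂_l ∘ ∂_{l+1} = 0`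
for all `l`; hence `FK_•(x_1,…,x_n)` is a chain complex of left `S[Θ;φ]`-modules. -/
theorem phiKoszul_comp_eq_zero
    {K : Type*} [CommRing K] {n : ℕ}
    (φ : MvPolynomial (Fin n) K →ₐ[K] MvPolynomial (Fin n) K)
    (hflat : (φ : MvPolynomial (Fin n) K →+* MvPolynomial (Fin n) K).Flat)
    (s : Fin n → MvPolynomial (Fin n) K)
    (hs : ∀ i, φ (X i) = s i * X i)
    {B : Type*} [Ring B]
    (sk : LeftSkewPolynomialRing (MvPolynomial (Fin n) K)
      (φ : MvPolynomial (Fin n) K →+* MvPolynomial (Fin n) K) B) :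
    ∀ l : ℕ, (FKd sk X s l).comp (FKd sk X s (l + 1)) = 0 :=
  phiKoszul_comp_eq_zero_general φ s hs sk
end

section
/- Let K be a commutative ring, S = K[x_1,…,x_n], and φ: S → S a flat K-algebra homomorphism with φ(x_i) = s_i·x_i for elements s_i ∈ S. For 1 ≤ l ≤ n, let M_l be the matrix over S representing (by right multiplication on row vectors) the l-th differential of the Koszul chain complex of S with respect to x_1,…,x_n, let M_l^{[φ]} be the matrix obtained by applying φ to every entry of M_l, and let D_l be the diagonal matrix over S[Θ;φ], indexed by the l-element subsets {i_1<…<i_l} of {1,…,n}, with diagonal entries Θ − s_{i_1}⋯s_{i_l} (with D_0 the 1×1 matrix (Θ − 1)). Then for every 0 ≤ l ≤ n one has the matrix identity M_l^{[φ]}·D_{l−1} = D_l·M_l over S[Θ;φ]. -/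
noncomputable section

open MvPolynomial

/-- The matrix (acting by right multiplication on row vectors) of the `l`-th Koszul
differential of `S` with respect to `x_1,…,x_n`, in the bases of `l`-element and
`(l-1)`-element subsets of `{1,…,n}`:  the `(T,T')` entry is `(-1)^{r-1} x_i` if
`T' = T \ {i}` with `i` the `r`-th element of `T`, and `0` otherwise. -/
def koszulMatrix {S : Type*} [CommRing S] {n : ℕ} (x : Fin n → S) (l : ℕ) :
    Matrix {t : Finset (Fin n) // t.card = l} {t : Finset (Fin n) // t.card = l - 1} S :=
  fun T T' => ∑ i ∈ T.1,
    if T.1.erase i = T'.1 then (-1 : S) ^ (T.1.filter fun j => j < i).card * x i else 0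

/-- The diagonal matrix `D_l` over `S[Θ;φ]`, indexed by the `l`-element subsets
`{i_1 < … < i_l}` of `{1,…,n}`, with diagonal entries `Θ - s_{i_1}⋯s_{i_l}`
(for `l = 0` this is the `1×1` matrix `(Θ - 1)`). -/
def thetaDiagonal {S : Type*} [CommRing S] {φ : S →+* S} {B : Type*} [Ring B]
    (sk : LeftSkewPolynomialRing S φ B) {n : ℕ} (s : Fin n → S) (l : ℕ) :
    Matrix {t : Finset (Fin n) // t.card = l} {t : Finset (Fin n) // t.card = l} B :=
  Matrix.diagonal fun T => sk.θ - sk.ι (∏ j ∈ T.1, s j)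

/-- Let `K` be a commutative ring, `S = K[x_1,…,x_n]` and `φ : S → S` a flat `K`-algebra
homomorphism with `φ(x_i) = s_i·x_i`.  With `M_l` the matrix of the `l`-th Koszul
differential, `M_l^{[φ]}` the entrywise image of `M_l` under `φ`, and `D_l` the diagonal
matrix with entries `Θ - s_{i_1}⋯s_{i_l}`, one has `M_l^{[φ]}·D_{l-1} = D_l·M_l` over
`S[Θ;φ]` for every `0 ≤ l ≤ n`. -/
theorem koszulMatrix_phi_mul_diagonal
    {K : Type*} [CommRing K] {n : ℕ}
    (φ : MvPolynomial (Fin n) K →ₐ[K] MvPolynomial (Fin n) K)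
    (hflat : (φ : MvPolynomial (Fin n) K →+* MvPolynomial (Fin n) K).Flat)
    (s : Fin n → MvPolynomial (Fin n) K)
    (hs : ∀ i, φ (X i) = s i * X i)
    {B : Type*} [Ring B]
    (sk : LeftSkewPolynomialRing (MvPolynomial (Fin n) K)
      (φ : MvPolynomial (Fin n) K →+* MvPolynomial (Fin n) K) B) :
    ∀ l : ℕ, l ≤ n →
      ((koszulMatrix X l).map fun g => sk.ι (φ g)) * thetaDiagonal sk s (l - 1) =
        thetaDiagonal sk s l * (koszulMatrix X l).map sk.ι := by
  intro l hl
  ext T T'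
  rw [thetaDiagonal, thetaDiagonal, Matrix.mul_diagonal, Matrix.diagonal_mul,
      Matrix.map_apply, Matrix.map_apply]
  have key : φ (koszulMatrix X l T T') * (∏ j ∈ T'.1, s j)
      = (∏ j ∈ T.1, s j) * koszulMatrix X l T T' := by
    simp only [koszulMatrix, map_sum, Finset.sum_mul, Finset.mul_sum]
    refine Finset.sum_congr rfl fun i hi => ?_
    split_ifs with h
    · rw [map_mul, map_pow, map_neg, map_one, hs, ← h,
        ← Finset.mul_prod_erase _ _ hi]
      ring
    · simp
  rw [mul_sub, sub_mul, sk.theta_mul, RingHom.coe_coe, ← map_mul, ← map_mul, key]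

end
end

section
/- Let K be a commutative ring, S = K[x_1,…,x_n], and φ: S → S a flat K-algebra homomorphism with φ(x_i) = s_i·x_i for elements s_i ∈ S. Let I_n = (x_1,…,x_n) ⊆ S. Then the zeroth homology of the φ-Koszul chain complex satisfies H_0(FK_•(x_1,…,x_n)) ≅ S/I_n as left S[Θ;φ]-modules, where Θ acts on S/I_n via the map induced by φ. -/
open PhiKoszul MvPolynomial

/-- The ideal `I_n = (x_1, …, x_n)` of `S = K[x_1,…,x_n]`. -/
noncomputable abbrev varIdeal (K : Type*) [CommRing K] (n : ℕ) : Ideal (MvPolynomial (Fin n) K) :=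
  Ideal.span (Set.range (X : Fin n → MvPolynomial (Fin n) K))

/-! Since `FK₀ = S[Θ;φ]` has a single basis vector, `H₀` is `S[Θ;φ]` modulo the left ideal `J`
generated by the images `x₁, …, xₙ, Θ - 1` of the degree-one basis vectors. The map
`b ↦ b • 1̄ : S[Θ;φ] → S/Iₙ` is onto and kills `J`; conversely `Θ ≡ 1` modulo `J` reduces every
`Σ aᵢ Θⁱ` to the constant `Σ aᵢ`, which is killed exactly when it lies in `Iₙ`. -/

namespace LeftSkewPolynomialRing

variable {A : Type*} [CommRing A] {φ : A →+* A} {B : Type*} [Ring B]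
  (sk : LeftSkewPolynomialRing A φ B)

/-- Since `Θ ≡ 1` modulo `B(Θ - 1)`, every `Σ aᵢ Θⁱ` is congruent to `Σ aᵢ`. -/
theorem exists_sub_ι_mem_span_θ_sub_one (b : B) :
    ∃ a : A, b - sk.ι a ∈ Ideal.span {sk.θ - 1} := by
  obtain ⟨f, rfl⟩ := sk.basis.surjective b
  refine ⟨f.sum fun _ a => a, ?_⟩
  simp only [Finsupp.sum]
  rw [map_sum, ← Finset.sum_sub_distrib]
  refine Ideal.sum_mem _ fun i _ => Ideal.mem_span_singleton'.mpr
    ⟨sk.ι (f i) * ∑ j ∈ Finset.range i, sk.θ ^ j, ?_⟩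
  rw [mul_assoc, geom_sum_mul, mul_sub, mul_one]

theorem ker_toSpanSingleton_eq {M : Type*} [AddCommGroup M] [Module B M] {m : M}
    {I : Ideal A} (hθ : sk.θ • m = m) (hI : ∀ a, sk.ι a • m = 0 ↔ a ∈ I) :
    LinearMap.ker (LinearMap.toSpanSingleton B M m) =
      Ideal.map sk.ι I ⊔ Ideal.span {sk.θ - 1} := by
  have hle : Ideal.map sk.ι I ⊔ Ideal.span {sk.θ - 1} ≤
      LinearMap.ker (LinearMap.toSpanSingleton B M m) := by
    refine sup_le (Ideal.map_le_iff_le_comap.mpr fun a ha => (hI a).mpr ha) ?_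
    rw [Ideal.span_le, Set.singleton_subset_iff]
    simp [sub_smul, hθ]
  refine le_antisymm (fun b hb => ?_) hle
  obtain ⟨a, ha⟩ := sk.exists_sub_ι_mem_span_θ_sub_one b
  have hιa : sk.ι a ∈ LinearMap.ker (LinearMap.toSpanSingleton B M m) := by
    simpa using sub_mem hb (hle (Ideal.mem_sup_right ha))
  rw [← sub_add_cancel b (sk.ι a)]
  exact Ideal.add_mem _ (Ideal.mem_sup_right ha)
    (Ideal.mem_sup_left (Ideal.mem_map_of_mem _ ((hI a).mp hιa)))

end LeftSkewPolynomialRing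

instance Finset.uniqueCardEqZero (α : Type*) : Unique {t : Finset α // t.card = 0} where
  default := ⟨∅, Finset.card_empty⟩
  uniq t := Subtype.ext (Finset.card_eq_zero.mp t.2)

namespace PhiKoszul

variable {S : Type*} [CommRing S] {φ : S →+* S} {B : Type*} [Ring B] {n : ℕ}
  (sk : LeftSkewPolynomialRing S φ B) (x s : Fin n → S)

theorem FKd_eq_linearCombination (l : ℕ) :
    FKd sk x s l = Finsupp.linearCombination B (tgt sk x s l) := by
  ext T
  simp [FKd, toSpan]

theorem tgt_singleton (a : Fin (n + 1)) :
    tgt sk x s 0 ⟨{a}, Finset.card_singleton a⟩ = Finsupp.single default (coeff sk x s {a} a) := by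
  simp [tgt, Unique.eq_default, Finset.filter_singleton]

theorem coeff_singleton_castSucc (i : Fin n) :
    coeff sk x s {i.castSucc} i.castSucc = sk.ι (x i) := by
  simp [coeff, (Fin.castSucc_lt_last i).ne']

theorem coeff_singleton_last : coeff sk x s {Fin.last n} (Fin.last n) = sk.θ - 1 := by
  simp [coeff]

theorem map_range_FKd_zero :
    (LinearMap.range (FKd sk x s 0)).map
        (Finsupp.uniqueLinearEquiv B B default : FK B n 0 ≃ₗ[B] B).toLinearMap =
      Ideal.span (Set.range (sk.ι ∘ x)) ⊔ Ideal.span {sk.θ - 1} := by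
  rw [FKd_eq_linearCombination, Finsupp.range_linearCombination, Submodule.map_span,
    ← Set.range_comp]
  apply le_antisymm
  · rw [Submodule.span_le]
    rintro _ ⟨⟨T, hT⟩, rfl⟩
    obtain ⟨a, rfl⟩ := Finset.card_eq_one.mp hT
    simp only [Function.comp_apply, tgt_singleton, SetLike.mem_coe]
    induction a using Fin.lastCases with
    | last => exact Ideal.mem_sup_right (by simp [coeff_singleton_last])
    | cast i =>
      exact Ideal.mem_sup_left (Ideal.subset_span ⟨i, by simp [coeff_singleton_castSucc]⟩)
  · have hmem (a : Fin (n + 1)) : coeff sk x s {a} a ∈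
        Submodule.span B (Set.range ((Finsupp.uniqueLinearEquiv B B default : FK B n 0 ≃ₗ[B] B) ∘
          tgt sk x s 0)) :=
      Submodule.subset_span ⟨⟨{a}, Finset.card_singleton a⟩, by simp [tgt_singleton]⟩
    refine sup_le (Ideal.span_le.mpr ?_) (Ideal.span_le.mpr ?_)
    · rintro _ ⟨i, rfl⟩
      simpa [coeff_singleton_castSucc] using hmem i.castSucc
    · simpa [coeff_singleton_last] using hmem (Fin.last n)

end PhiKoszul

theorem phiKoszul_homology_zero_general
    {K : Type*} [CommRing K] {n : ℕ}
    (φ : MvPolynomial (Fin n) K →ₐ[K] MvPolynomial (Fin n) K)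
    (s : Fin n → MvPolynomial (Fin n) K)
    {B : Type*} [Ring B]
    (sk : LeftSkewPolynomialRing (MvPolynomial (Fin n) K)
      (φ : MvPolynomial (Fin n) K →+* MvPolynomial (Fin n) K) B)
    -- the left `S[Θ;φ]`-module structure of `S/I_n`:
    (inst : Module B (MvPolynomial (Fin n) K ⧸ varIdeal K n))
    (hι : ∀ (g : MvPolynomial (Fin n) K)
        (m : MvPolynomial (Fin n) K ⧸ varIdeal K n),
      (letI := inst; sk.ι g • m) = Ideal.Quotient.mk (varIdeal K n) g * m)
    (hθ : ∀ g : MvPolynomial (Fin n) K,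
      (letI := inst; sk.θ • (Ideal.Quotient.mk (varIdeal K n) g)) =
        Ideal.Quotient.mk (varIdeal K n) (φ g)) :
    letI := inst
    Nonempty ((FK B n 0 ⧸ LinearMap.range (FKd sk X s 0)) ≃ₗ[B]
      (MvPolynomial (Fin n) K ⧸ varIdeal K n)) := by
  let _ := inst
  let ψ := LinearMap.toSpanSingleton B _ (Ideal.Quotient.mk (varIdeal K n) 1)
  have hιψ (g : MvPolynomial (Fin n) K) : ψ (sk.ι g) = Ideal.Quotient.mk (varIdeal K n) g := by
    simp [ψ, hι]
  have hker : LinearMap.ker ψ =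
      Ideal.span (Set.range (sk.ι ∘ X)) ⊔ Ideal.span {sk.θ - 1} := by
    rw [sk.ker_toSpanSingleton_eq (by simpa using hθ 1) fun g => by
      rw [← LinearMap.toSpanSingleton_apply, hιψ, Ideal.Quotient.eq_zero_iff_mem],
      Ideal.map_span, Set.range_comp]
  have hψ : Function.Surjective ψ := fun q => by
    obtain ⟨g, rfl⟩ := Ideal.Quotient.mk_surjective q
    exact ⟨_, hιψ g⟩
  exact ⟨(Submodule.Quotient.equiv _ _ _ (map_range_FKd_zero sk X s)).trans <|
    (Submodule.quotEquivOfEq _ _ hker.symm).trans (ψ.quotKerEquivOfSurjective hψ)⟩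

/-- Let `K` be a commutative ring, `S = K[x_1,…,x_n]`, `φ : S → S` a flat `K`-algebra
homomorphism with `φ(x_i) = s_i·x_i`, and `I_n = (x_1,…,x_n)`.  Then the zeroth homology
of the `φ`-Koszul chain complex, `FK_0 / im ∂_1`, is isomorphic to `S/I_n` as left
`S[Θ;φ]`-modules, where `Θ` acts on `S/I_n` via the map induced by `φ`. -/
theorem phiKoszul_homology_zero
    {K : Type*} [CommRing K] {n : ℕ}
    (φ : MvPolynomial (Fin n) K →ₐ[K] MvPolynomial (Fin n) K)
    (hflat : (φ : MvPolynomial (Fin n) K →+* MvPolynomial (Fin n) K).Flat)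
    (s : Fin n → MvPolynomial (Fin n) K)
    (hs : ∀ i, φ (X i) = s i * X i)
    {B : Type*} [Ring B]
    (sk : LeftSkewPolynomialRing (MvPolynomial (Fin n) K)
      (φ : MvPolynomial (Fin n) K →+* MvPolynomial (Fin n) K) B)
    -- the left `S[Θ;φ]`-module structure of `S/I_n`:
    (inst : Module B (MvPolynomial (Fin n) K ⧸ varIdeal K n))
    (hι : ∀ (g : MvPolynomial (Fin n) K)
        (m : MvPolynomial (Fin n) K ⧸ varIdeal K n),
      (letI := inst; sk.ι g • m) = Ideal.Quotient.mk (varIdeal K n) g * m)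
    (hθ : ∀ g : MvPolynomial (Fin n) K,
      (letI := inst; sk.θ • (Ideal.Quotient.mk (varIdeal K n) g)) =
        Ideal.Quotient.mk (varIdeal K n) (φ g)) :
    letI := inst
    Nonempty ((FK B n 0 ⧸ LinearMap.range (FKd sk X s 0)) ≃ₗ[B]
      (MvPolynomial (Fin n) K ⧸ varIdeal K n)) :=
  phiKoszul_homology_zero_general φ s sk inst hι hθ
end
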